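/- For all real x ≥ 0, x^x * exp(-x) * sqrt(2x + 1) ≤ Γ(x+1) ≤ x^x * exp(-x) * sqrt(π(2x + 1)), where Γ is the Gamma function (interpreting 0^0 = 1). -/

import Mathlib

/-!
Put `G x = log Γ(x + 1) - (x + 1/2) log (x + 1/2) + x`. Both bounds follow from
`G 0 = (log 2) / 2 ≤ G x ≤ (log (2π) - 1) / 2`, since `x log (1 + 1/(2x))` lies in `[0, 1/2]`.
The upper value is `lim G n`, by Stirling's formula, so everything rests on `G` being
nondecreasing. Writing `log Γ(y + 1) - log Γ(x + 1)` as the limit of the Euler–Gauss sequences,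
this reduces to a telescoping comparison of `log (y + 1 + m) - log (x + 1 + m)` with
increments of `u log u`, i.e. to the monotonicity of `u ↦ φ(u + 1/2) - φ(u - 1/2) - log u`
with `φ u = u log u`. Its derivative is `log ((u + 1/2)/(u - 1/2)) - 1/u`, nonnegative because
`1/u` is the first term of the series of `log (1 + 1/(u - 1/2))` in powers of `1/(2u)`.
-/

open Real Filter Topology Set

lemma inv_le_log_add_half_sub_log_sub_half {u : ℝ} (hu : 1 / 2 < u) :
    u⁻¹ ≤ log (u + 1 / 2) - log (u - 1 / 2) := by
  have hu' : u - 1 / 2 ≠ 0 := by linarith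
  have hfirst := le_hasSum (hasSum_log_one_add_inv (sub_pos.2 hu)) 0 fun k _ ↦ by positivity
  have hterm : (2 : ℝ) * (1 / (2 * (0 : ℕ) + 1)) * (1 / (2 * (u - 1 / 2) + 1)) ^ (2 * 0 + 1)
      = u⁻¹ := by
    rw [show 2 * (u - 1 / 2) + 1 = 2 * u by ring]
    simp only [CharP.cast_eq_zero, mul_zero, zero_add, div_one, mul_one, pow_one, one_div,
      mul_inv_rev]
    ring
  have hlog : log (1 + (u - 1 / 2)⁻¹) = log (u + 1 / 2) - log (u - 1 / 2) := by
    rw [← log_div (by linarith) hu']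
    congr 1
    rw [eq_div_iff hu', add_mul, inv_mul_cancel₀ hu']
    ring
  rwa [hterm, hlog] at hfirst

lemma monotoneOn_mul_log_add_half_sub_mul_log_sub_half_sub_log :
    MonotoneOn (fun u ↦ (u + 1 / 2) * log (u + 1 / 2) - (u - 1 / 2) * log (u - 1 / 2) - log u)
      (Ioi (1 / 2)) := by
  have hderiv : ∀ u ∈ Ioi (1 / 2 : ℝ), HasDerivAt
      (fun u ↦ (u + 1 / 2) * log (u + 1 / 2) - (u - 1 / 2) * log (u - 1 / 2) - log u)
      (log (u + 1 / 2) - log (u - 1 / 2) - u⁻¹) u := by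
    intro u (hu : 1 / 2 < u)
    have h₁ := (hasDerivAt_mul_log (x := u + 1 / 2) (by linarith)).comp_add_const u (1 / 2)
    have h₂ := (hasDerivAt_mul_log (x := u - 1 / 2) (by linarith)).comp_sub_const u (1 / 2)
    exact ((h₁.sub h₂).sub (hasDerivAt_log (by linarith))).congr_deriv (by ring)
  refine monotoneOn_of_hasDerivWithinAt_nonneg
    (f' := fun u ↦ log (u + 1 / 2) - log (u - 1 / 2) - u⁻¹)
    (convex_Ioi _) (fun u hu ↦ (hderiv u hu).continuousAt.continuousWithinAt) ?_ ?_ <;>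
    rw [interior_Ioi]
  · exact fun u hu ↦ (hderiv u hu).hasDerivWithinAt
  · exact fun u hu ↦ sub_nonneg.2 (inv_le_log_add_half_sub_log_sub_half hu)

lemma sum_log_sub_log_le {x y : ℝ} (hx : -1 / 2 < x) (hxy : x ≤ y) (n : ℕ) :
    ∑ m ∈ Finset.range (n + 1), (log (y + 1 + m) - log (x + 1 + m)) ≤
      ((y + n + 3 / 2) * log (y + n + 3 / 2) - (x + n + 3 / 2) * log (x + n + 3 / 2)) -
      ((y + 1 / 2) * log (y + 1 / 2) - (x + 1 / 2) * log (x + 1 / 2)) := by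
  set g : ℕ → ℝ := fun m ↦
    (y + m + 1 / 2) * log (y + m + 1 / 2) - (x + m + 1 / 2) * log (x + m + 1 / 2)
  have hstep : ∀ m ∈ Finset.range (n + 1),
      log (y + 1 + m) - log (x + 1 + m) ≤ g (m + 1) - g m := by
    intro m _
    have hm : (0 : ℝ) ≤ m := m.cast_nonneg
    have := monotoneOn_mul_log_add_half_sub_mul_log_sub_half_sub_log
      (show x + 1 + m ∈ Ioi (1 / 2) by simp only [mem_Ioi]; linarith)
      (show y + 1 + m ∈ Ioi (1 / 2) by simp only [mem_Ioi]; linarith) (by linarith)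
    simp only [g, Nat.cast_add, Nat.cast_one]
    ring_nf at this ⊢
    linarith
  calc _ ≤ ∑ m ∈ Finset.range (n + 1), (g (m + 1) - g m) := Finset.sum_le_sum hstep
    _ = g (n + 1) - g 0 := Finset.sum_range_sub g (n + 1)
    _ = _ := by simp only [g, Nat.cast_add, Nat.cast_one, Nat.cast_zero]; ring_nf

lemma tendsto_add_mul_log_add_sub_add_mul_log (a : ℝ) :
    Tendsto (fun t ↦ (t + a) * log (t + a) - (t + a) * log t) atTop (𝓝 a) := by
  have hratio : Tendsto (fun t : ℝ ↦ 1 + a / t) atTop (𝓝 1) := by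
    simpa using (tendsto_const_nhds.div_atTop tendsto_id).const_add (1 : ℝ)
  have hlog : Tendsto (fun t : ℝ ↦ log (1 + a / t)) atTop (𝓝 0) := by
    simpa [Function.comp_def] using (continuousAt_log one_ne_zero).tendsto.comp hratio
  have hlim := (tendsto_mul_log_one_add_div_atTop a).add (hlog.const_mul a)
  rw [mul_zero, add_zero] at hlim
  refine hlim.congr' ?_
  filter_upwards [eventually_gt_atTop 0, eventually_gt_atTop (-a)] with t ht hta
  rw [← mul_sub, ← log_div (by linarith) ht.ne', add_div, div_self ht.ne']
  ring

noncomputable def logGammaRemainder (x : ℝ) : ℝ :=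
  log (Gamma (x + 1)) - (x + 1 / 2) * log (x + 1 / 2) + x

lemma monotoneOn_logGammaRemainder : MonotoneOn logGammaRemainder (Ioi (-1 / 2)) := by
  intro x (hx : -1 / 2 < x) y (hy : -1 / 2 < y) hxy
  have hΓ : Tendsto
      (fun n ↦ BohrMollerup.logGammaSeq (y + 1) n - BohrMollerup.logGammaSeq (x + 1) n)
      atTop (𝓝 (log (Gamma (y + 1)) - log (Gamma (x + 1)))) :=
    (BohrMollerup.tendsto_log_gamma (by linarith)).sub
      (BohrMollerup.tendsto_log_gamma (by linarith))
  have hshift : Tendsto (fun n : ℕ ↦ (y - x) * log n -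
      ((y + n + 3 / 2) * log (y + n + 3 / 2) - (x + n + 3 / 2) * log (x + n + 3 / 2)))
      atTop (𝓝 (-((y + 3 / 2) - (x + 3 / 2)))) := by
    refine (((tendsto_add_mul_log_add_sub_add_mul_log (y + 3 / 2)).sub
      (tendsto_add_mul_log_add_sub_add_mul_log (x + 3 / 2))).comp
        tendsto_natCast_atTop_atTop).neg.congr fun n ↦ ?_
    simp only [Function.comp_apply]
    ring_nf
  have hle : ∀ n : ℕ, (y - x) * log n -
      ((y + n + 3 / 2) * log (y + n + 3 / 2) - (x + n + 3 / 2) * log (x + n + 3 / 2)) +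
      ((y + 1 / 2) * log (y + 1 / 2) - (x + 1 / 2) * log (x + 1 / 2)) ≤
      BohrMollerup.logGammaSeq (y + 1) n - BohrMollerup.logGammaSeq (x + 1) n := by
    intro n
    have := sum_log_sub_log_le hx hxy n
    simp only [BohrMollerup.logGammaSeq, Finset.sum_sub_distrib] at this ⊢
    linarith
  have := le_of_tendsto_of_tendsto' (hshift.add_const _) hΓ hle
  simp only [logGammaRemainder]
  linarith

lemma logGammaRemainder_zero : logGammaRemainder 0 = log 2 / 2 := by
  simp only [logGammaRemainder, zero_add, Gamma_one, log_one, one_div, log_inv]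
  ring

lemma tendsto_logGammaRemainder_natCast :
    Tendsto (fun n : ℕ ↦ logGammaRemainder n) atTop (𝓝 ((log 2 + log π - 1) / 2)) := by
  have hstirling := (continuousAt_log (sqrt_pos.2 pi_pos).ne').tendsto.comp
    Stirling.tendsto_stirlingSeq_sqrt_pi
  have hshift := (tendsto_add_mul_log_add_sub_add_mul_log (1 / 2)).comp tendsto_natCast_atTop_atTop
  have hlim := (hstirling.add_const (log 2 / 2)).sub hshift
  rw [log_sqrt pi_pos.le, show log π / 2 + log 2 / 2 - 1 / 2 = (log 2 + log π - 1) / 2 by ring]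
    at hlim
  refine hlim.congr' ?_
  filter_upwards [eventually_ne_atTop 0] with n hn
  have hn' : (n : ℝ) ≠ 0 := Nat.cast_ne_zero.2 hn
  simp only [Function.comp_apply, logGammaRemainder, Gamma_nat_eq_factorial,
    Stirling.log_stirlingSeq_formula, log_mul two_ne_zero hn', log_div hn' (exp_ne_zero 1), log_exp]
  ring

lemma logGammaRemainder_le {x : ℝ} (hx : -1 / 2 < x) :
    logGammaRemainder x ≤ (log 2 + log π - 1) / 2 := by
  refine ge_of_tendsto tendsto_logGammaRemainder_natCast ?_
  filter_upwards [eventually_ge_atTop ⌈x⌉₊] with n hn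
  have hxn : x ≤ n := (Nat.le_ceil x).trans (by exact_mod_cast hn)
  exact monotoneOn_logGammaRemainder hx (by simp only [mem_Ioi]; linarith) hxn

lemma mul_log_add_sub_log_le {x a : ℝ} (hx : 0 < x) (hxa : 0 < x + a) :
    x * (log (x + a) - log x) ≤ a := by
  rw [← log_div hxa.ne' hx.ne']
  calc x * log ((x + a) / x) ≤ x * ((x + a) / x - 1) :=
        mul_le_mul_of_nonneg_left (log_le_sub_one_of_pos (div_pos hxa hx)) hx.le
    _ = a := by field_simp; ring

lemma rpow_self_mul_exp_neg_mul_sqrt {x c : ℝ} (hx : 0 < x) (hc : 0 < c) :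
    x ^ x * exp (-x) * √c = exp (x * log x - x + log c / 2) := by
  rw [rpow_def_of_pos hx, ← exp_log (sqrt_pos.2 hc), log_sqrt hc.le, ← exp_add, ← exp_add]
  ring_nf

theorem stmt_1 (x : ℝ) (hx : 0 ≤ x) :
    x ^ x * Real.exp (-x) * Real.sqrt (2 * x + 1) ≤ Real.Gamma (x + 1) ∧
    Real.Gamma (x + 1) ≤ x ^ x * Real.exp (-x) * Real.sqrt (Real.pi * (2 * x + 1)) := by
  rcases hx.eq_or_lt with rfl | hx
  · norm_num [Gamma_one]
    linarith [pi_gt_three]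
  have hΓ : 0 < Gamma (x + 1) := Gamma_pos_of_pos (by linarith)
  have hlower : logGammaRemainder 0 ≤ logGammaRemainder x :=
    monotoneOn_logGammaRemainder (by norm_num) (by simp only [mem_Ioi]; linarith) hx.le
  have hupper := logGammaRemainder_le (by linarith : -1 / 2 < x)
  have hlog_le : x * log x ≤ x * log (x + 1 / 2) :=
    mul_le_mul_of_nonneg_left (log_le_log hx (by linarith)) hx.le
  have hlog_sub := mul_log_add_sub_log_le hx (by linarith : 0 < x + 1 / 2)
  have hlog_two : log (2 * x + 1) = log 2 + log (x + 1 / 2) := by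
    rw [← log_mul two_ne_zero (by linarith)]; ring_nf
  rw [logGammaRemainder_zero] at hlower
  unfold logGammaRemainder at hlower hupper
  rw [rpow_self_mul_exp_neg_mul_sqrt hx (by linarith), ← le_log_iff_exp_le hΓ,
    rpow_self_mul_exp_neg_mul_sqrt hx (by positivity), ← log_le_iff_le_exp hΓ,
    log_mul pi_pos.ne' (by linarith), hlog_two]
  have hexpand : (x + 1 / 2) * log (x + 1 / 2) = x * log (x + 1 / 2) + log (x + 1 / 2) / 2 := by
    ring
  constructor <;> linarith
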